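/- Let b : 𝕋^d → ℂ have Fourier coefficients satisfying |b_k| ≤ D e^{−ρ⟨k⟩} for some D, ρ > 0, and for ℓ ∈ ℤ^d, j = (j₁,...,j_p) ∈ (ℤ^d)^p, set a_{ℓ;j} = b_{ℓ − j₁ − ⋯ − j_p}. Then for every R > 0 there is a constant c_R such that |a_{ℓ;j}| ≤ c_R (μ₃/(μ₃ + μ₁ − μ₂))^R, where μ₁ ≥ μ₂ ≥ μ₃ are the three largest values among ⟨ℓ⟩, ⟨j₁⟩, ..., ⟨j_p⟩; i.e., the coefficients satisfy the abstract decay hypothesis with θ = 0 and ν = 0. -/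

import Mathlib

open scoped BigOperators

noncomputable section

/-- The weight `⟨j⟩ = max(1, |j¹|, ..., |j^d|)` for `j ∈ ℤ^d`. -/
def wt {d : ℕ} (j : Fin d → ℤ) : ℕ :=
  max 1 (Finset.univ.sup fun i => (j i).natAbs)

/-- `mu k n` is the `n`-th largest value among `⟨k₁⟩, ..., ⟨k_q⟩`
(equal to `1` if `n > q`). -/
def mu {q d : ℕ} (k : Fin q → Fin d → ℤ) (n : ℕ) : ℕ :=
  if n ≤ q then
    ((Multiset.map (fun i => wt (k i)) Finset.univ.val).sort (· ≤ ·)).getD (q - n) 1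
  else 1

/-- `A_θ(k) = μ₂^θ μ₃^{1−θ} / (μ₂^θ μ₃^{1−θ} + μ₁ − μ₂)`. -/
def Atheta {q d : ℕ} (θ : ℝ) (k : Fin q → Fin d → ℤ) : ℝ :=
  ((mu k 2 : ℝ) ^ θ * (mu k 3 : ℝ) ^ (1 - θ)) /
    ((mu k 2 : ℝ) ^ θ * (mu k 3 : ℝ) ^ (1 - θ) + (mu k 1 : ℝ) - (mu k 2 : ℝ))


/-!
Write `M = ℓ - ∑ i, j i` for the momentum. Each of `ℓ, j₁, …, j_p` is a signed sum of `M` and the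
others, so the largest weight satisfies `2 μ₁ ≤ ⟨M⟩ + ⟨ℓ⟩ + ∑ ⟨jᵢ⟩ ≤ ⟨M⟩ + μ₁ + μ₂ + p μ₃`. Hence
`μ₃ + μ₁ - μ₂ ≤ (p + 2) μ₃ ⟨M⟩`, i.e. the ratio in the bound is at least `1 / ((p + 2) ⟨M⟩)`, and the
exponential decay `e^{-ρ⟨M⟩}` beats any power `⟨M⟩^{-R}`.
-/

open Finset

section Weight

variable {d : ℕ}

lemma one_le_wt (x : Fin d → ℤ) : 1 ≤ wt x := le_max_left _ _

lemma natAbs_le_wt (x : Fin d → ℤ) (i : Fin d) : (x i).natAbs ≤ wt x :=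
  (le_sup (f := fun i => (x i).natAbs) (mem_univ i)).trans (le_max_right _ _)

lemma wt_le_of_natAbs_le {x : Fin d → ℤ} {n : ℕ} (hn : 1 ≤ n) (h : ∀ i, (x i).natAbs ≤ n) :
    wt x ≤ n :=
  max_le hn (Finset.sup_le fun i _ => h i)

@[simp]
lemma wt_neg (x : Fin d → ℤ) : wt (-x) = wt x := by
  simp [wt]

lemma wt_add_le (x y : Fin d → ℤ) : wt (x + y) ≤ wt x + wt y :=
  wt_le_of_natAbs_le (by linarith [one_le_wt x]) fun i =>
    (Int.natAbs_add_le _ _).trans (add_le_add (natAbs_le_wt x i) (natAbs_le_wt y i))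

lemma wt_add_sum_le {ι : Type*} (x : Fin d → ℤ) (s : Finset ι) (f : ι → Fin d → ℤ) :
    wt (x + ∑ i ∈ s, f i) ≤ wt x + ∑ i ∈ s, wt (f i) := by
  classical
  induction s using Finset.induction_on with
  | empty => simp
  | insert a s ha ih =>
    rw [sum_insert ha, sum_insert ha, add_left_comm, add_left_comm (wt x)]
    exact (wt_add_le _ _).trans (Nat.add_le_add_left ih _)

lemma wt_le_wt_sum_add_sum_erase {q : ℕ} (x : Fin q → Fin d → ℤ) (m : Fin q) :
    wt (x m) ≤ wt (∑ i, x i) + ∑ i ∈ univ.erase m, wt (x i) := by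
  have hx : x m = ∑ i, x i + ∑ i ∈ univ.erase m, -x i := by
    rw [sum_neg_distrib, ← add_sum_erase _ _ (mem_univ m)]
    abel
  rw [hx]
  simpa using wt_add_sum_le (∑ i, x i) (univ.erase m) (fun i => -x i)

end Weight

lemma List.sum_le_mul_add_getElem_add_getElem {L : List ℕ} {n c : ℕ} (hL : L.length = n + 2)
    (hc : ∀ i (hi : i < n), L[i] ≤ c) : L.sum ≤ n * c + L[n] + L[n + 1] := by
  have hdrop : L.drop n = [L[n], L[n + 1]] := by
    rw [List.drop_eq_getElem_cons (by omega), List.drop_eq_getElem_cons (by omega),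
      List.drop_eq_nil_of_le (by omega)]
  have htake : (L.take n).sum ≤ n * c := by
    refine (List.sum_le_card_nsmul _ c fun x hx => ?_).trans ?_
    · obtain ⟨i, hi, rfl⟩ := List.mem_take_iff_getElem.1 hx
      exact hc i (by omega)
    · rw [List.length_take, smul_eq_mul]
      exact Nat.mul_le_mul_right _ (min_le_left _ _)
  have hsplit : L.sum = (L.take n).sum + (L.drop n).sum := by
    rw [← List.sum_append, List.take_append_drop]
  rw [hsplit, hdrop, List.sum_pair]
  omega

section OrderStatistics

variable {q d : ℕ} (k : Fin q → Fin d → ℤ)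

def sortedWt : List ℕ :=
  (Multiset.map (fun i => wt (k i)) univ.val).sort (· ≤ ·)

lemma sortedWt_sortedLE : (sortedWt k).SortedLE :=
  (Multiset.pairwise_sort _ _).sortedLE

@[simp]
lemma length_sortedWt : (sortedWt k).length = q := by
  simp [sortedWt]

lemma mem_sortedWt {n : ℕ} : n ∈ sortedWt k ↔ ∃ i, wt (k i) = n := by
  simp [sortedWt]

lemma sum_sortedWt : (sortedWt k).sum = ∑ i, wt (k i) := by
  rw [← Multiset.sum_coe, sortedWt, Multiset.sort_eq]
  rfl

lemma mu_eq_getElem {n : ℕ} (hn : 1 ≤ n) (hnq : n ≤ q) :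
    mu k n = (sortedWt k)[q - n]'(by rw [length_sortedWt]; omega) := by
  rw [mu, if_pos hnq, List.getD_eq_getElem]
  rfl

lemma mu_congr {k k' : Fin q → Fin d → ℤ} (h : ∀ i, wt (k i) = wt (k' i)) (n : ℕ) :
    mu k n = mu k' n := by
  simp only [mu, h]

lemma one_le_mu (n : ℕ) : 1 ≤ mu k n := by
  rw [mu]
  split_ifs
  · change 1 ≤ (sortedWt k).getD (q - n) 1
    rw [List.getD_eq_getElem?_getD]
    cases h : (sortedWt k)[q - n]? with
    | none => rfl
    | some x =>
      obtain ⟨i, rfl⟩ := (mem_sortedWt k).1 (List.mem_of_getElem? h)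
      exact one_le_wt _
  · rfl

lemma mu_le_mu {m n : ℕ} (hm : 1 ≤ m) (hmn : m ≤ n) : mu k n ≤ mu k m := by
  by_cases hn : n ≤ q
  · rw [mu_eq_getElem k (hm.trans hmn) hn, mu_eq_getElem k hm (hmn.trans hn)]
    exact (sortedWt_sortedLE k).getElem_le_getElem_of_le (by omega)
  · rw [mu, if_neg hn]
    exact one_le_mu k m

lemma wt_le_mu_one (i : Fin q) : wt (k i) ≤ mu k 1 := by
  obtain ⟨r, hr, hri⟩ := List.getElem_of_mem ((mem_sortedWt k).2 ⟨i, rfl⟩)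
  rw [length_sortedWt] at hr
  rw [mu_eq_getElem k le_rfl (by omega), ← hri]
  exact (sortedWt_sortedLE k).getElem_le_getElem_of_le (by omega)

lemma exists_wt_eq_mu_one (hq : 0 < q) : ∃ i, wt (k i) = mu k 1 :=
  (mem_sortedWt k).1 (by rw [mu_eq_getElem k le_rfl hq]; exact List.getElem_mem _)

lemma sum_wt_le_mu : ∑ i, wt (k i) ≤ mu k 1 + mu k 2 + (q - 2) * mu k 3 := by
  rcases lt_or_ge q 2 with hq | hq
  · have h := sum_le_card_nsmul univ (fun i => wt (k i)) _ fun i _ => wt_le_mu_one k i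
    rw [card_univ, Fintype.card_fin, smul_eq_mul] at h
    nlinarith
  obtain ⟨n, rfl⟩ := Nat.exists_eq_add_of_le' hq
  rw [← sum_sortedWt, mu_eq_getElem k le_rfl (by omega), mu_eq_getElem k one_le_two (by omega)]
  show (sortedWt k).sum ≤ (sortedWt k)[n + 1] + (sortedWt k)[n] + n * mu k 3
  have hbound := List.sum_le_mul_add_getElem_add_getElem (length_sortedWt k) (c := mu k 3)
    fun i hi => by
      rw [mu_eq_getElem k (by norm_num) (by omega)]
      exact (sortedWt_sortedLE k).getElem_le_getElem_of_le (by omega)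
  omega

end OrderStatistics

section Momentum

variable {d : ℕ}

lemma mu_one_le {q : ℕ} (k : Fin q → Fin d → ℤ) (hq : 0 < q) :
    mu k 1 ≤ mu k 2 + (q - 2) * mu k 3 + wt (∑ i, k i) := by
  obtain ⟨m, hm⟩ := exists_wt_eq_mu_one k hq
  have hmom := wt_le_wt_sum_add_sum_erase k m
  have hsplit := add_sum_erase univ (fun i => wt (k i)) (mem_univ m)
  have hsum := sum_wt_le_mu k
  omega

lemma mu_one_le_cons {p : ℕ} (ℓ : Fin d → ℤ) (j : Fin p → Fin d → ℤ) :
    mu (Fin.cons ℓ j) 1 ≤ mu (Fin.cons ℓ j) 2 + p * mu (Fin.cons ℓ j) 3 + wt (ℓ - ∑ i, j i) := by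
  set k : Fin (p + 1) → Fin d → ℤ := Fin.cons ℓ j
  -- negating the `j i` turns the momentum into the plain sum of the tuple
  set k' : Fin (p + 1) → Fin d → ℤ := Fin.cons ℓ (-j)
  have hwt : ∀ i, wt (k' i) = wt (k i) := by
    intro i
    cases i using Fin.cases <;> simp [k, k']
  have hsum : ∑ i, k' i = ℓ - ∑ i, j i := by
    simp [k', Fin.sum_univ_succ, sub_eq_add_neg]
  have h := mu_one_le k' p.succ_pos
  simp only [mu_congr hwt, hsum] at h
  have hcoef : (p + 1 - 2) * mu k 3 ≤ p * mu k 3 :=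
    Nat.mul_le_mul_right _ (by omega)
  omega

end Momentum

lemma rpow_mul_exp_neg_mul_le {ρ R w : ℝ} (hρ : 0 < ρ) (hR : 0 < R) (hw : 0 ≤ w) :
    w ^ R * Real.exp (-ρ * w) ≤ (R / ρ) ^ R := by
  have hpow : (ρ / R) ^ R * w ^ R ≤ Real.exp (ρ * w) := by
    rw [← Real.mul_rpow (by positivity) hw]
    calc (ρ / R * w) ^ R ≤ Real.exp (ρ / R * w) ^ R := by
          gcongr
          linarith [Real.add_one_le_exp (ρ / R * w)]
      _ = Real.exp (ρ * w) := by
          rw [← Real.exp_mul]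
          field_simp
  have hinv : (R / ρ) ^ R * (ρ / R) ^ R = 1 := by
    have h : R / ρ * (ρ / R) = 1 := by field_simp
    rw [← Real.mul_rpow (by positivity) (by positivity), h, Real.one_rpow]
  calc w ^ R * Real.exp (-ρ * w) = (R / ρ) ^ R * ((ρ / R) ^ R * w ^ R) * Real.exp (-ρ * w) := by
        rw [← mul_assoc, hinv, one_mul]
    _ ≤ (R / ρ) ^ R * Real.exp (ρ * w) * Real.exp (-ρ * w) := by gcongr
    _ = (R / ρ) ^ R := by
        rw [mul_assoc, ← Real.exp_add]
        simp

lemma exp_neg_mul_le_rpow_div {ρ R P w t x : ℝ} (hρ : 0 < ρ) (hR : 0 < R) (hP : 0 ≤ P)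
    (hw : 1 ≤ w) (ht : 1 ≤ t) (hx : 0 ≤ x) (hxw : x ≤ P * t + w) :
    Real.exp (-ρ * w) ≤ ((P + 2) * R / ρ) ^ R * (t / (t + x)) ^ R := by
  have hratio : ((P + 2) * w)⁻¹ ≤ t / (t + x) := by
    rw [le_div_iff₀ (by linarith), inv_mul_le_iff₀ (by positivity)]
    have ht0 : 0 ≤ t := by linarith
    nlinarith [mul_nonneg (sub_nonneg.2 hw) (mul_nonneg hP ht0),
      mul_nonneg (sub_nonneg.2 hw) ht0, mul_nonneg (by linarith : 0 ≤ w) (sub_nonneg.2 ht)]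
  have hexp : Real.exp (-ρ * w) ≤ (R / ρ) ^ R / w ^ R := by
    rw [le_div_iff₀ (by positivity), mul_comm]
    exact rpow_mul_exp_neg_mul_le hρ hR (by linarith)
  calc Real.exp (-ρ * w) ≤ (R / ρ) ^ R / w ^ R := hexp
    _ = ((P + 2) * R / ρ) ^ R * ((P + 2) * w)⁻¹ ^ R := by
        rw [Real.inv_rpow (by positivity), Real.mul_rpow (by positivity) (by positivity),
          mul_div_assoc, Real.mul_rpow (by positivity) (by positivity)]
        field_simp
    _ ≤ ((P + 2) * R / ρ) ^ R * (t / (t + x)) ^ R := by gcongr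

theorem stmt9_general (d p : ℕ)
    (b : (Fin d → ℤ) → ℂ) (D ρ : ℝ) (hD : 0 < D) (hρ : 0 < ρ)
    (hb : ∀ k : Fin d → ℤ, ‖b k‖ ≤ D * Real.exp (-ρ * (wt k : ℝ))) :
    ∀ R : ℝ, 0 < R → ∃ c : ℝ, 0 < c ∧
      ∀ (ℓ : Fin d → ℤ) (j : Fin p → Fin d → ℤ),
        ‖b (ℓ - ∑ i, j i)‖ ≤
          c * ((mu (Fin.cons ℓ j) 3 : ℝ) /
            ((mu (Fin.cons ℓ j) 3 : ℝ) + (mu (Fin.cons ℓ j) 1 : ℝ) -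
              (mu (Fin.cons ℓ j) 2 : ℝ))) ^ R := by
  intro R hR
  refine ⟨D * ((p + 2) * R / ρ) ^ R, by positivity, fun ℓ j => ?_⟩
  set k : Fin (p + 1) → Fin d → ℤ := Fin.cons ℓ j
  have hmom : (mu k 1 : ℝ) ≤ mu k 2 + p * mu k 3 + wt (ℓ - ∑ i, j i) := by
    exact_mod_cast mu_one_le_cons ℓ j
  have h21 : (mu k 2 : ℝ) ≤ mu k 1 := by exact_mod_cast mu_le_mu k le_rfl one_le_two
  have h3 : (1 : ℝ) ≤ mu k 3 := by exact_mod_cast one_le_mu k 3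
  have hw : (1 : ℝ) ≤ wt (ℓ - ∑ i, j i) := by exact_mod_cast one_le_wt _
  calc ‖b (ℓ - ∑ i, j i)‖ ≤ D * Real.exp (-ρ * wt (ℓ - ∑ i, j i)) := hb _
    _ ≤ D * (((p + 2) * R / ρ) ^ R * ((mu k 3 : ℝ) / (mu k 3 + (mu k 1 - mu k 2))) ^ R) := by
      gcongr
      exact exp_neg_mul_le_rpow_div hρ hR p.cast_nonneg hw h3 (by linarith) (by linarith)
    _ = _ := by rw [add_sub_assoc', mul_assoc]

theorem stmt9 (d p : ℕ) (hd : 1 ≤ d) (hp : 1 ≤ p)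
    (b : (Fin d → ℤ) → ℂ) (D ρ : ℝ) (hD : 0 < D) (hρ : 0 < ρ)
    (hb : ∀ k : Fin d → ℤ, ‖b k‖ ≤ D * Real.exp (-ρ * (wt k : ℝ))) :
    ∀ R : ℝ, 0 < R → ∃ c : ℝ, 0 < c ∧
      ∀ (ℓ : Fin d → ℤ) (j : Fin p → Fin d → ℤ),
        ‖b (ℓ - ∑ i, j i)‖ ≤
          c * ((mu (Fin.cons ℓ j) 3 : ℝ) /
            ((mu (Fin.cons ℓ j) 3 : ℝ) + (mu (Fin.cons ℓ j) 1 : ℝ) -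
              (mu (Fin.cons ℓ j) 2 : ℝ))) ^ R :=
  stmt9_general d p b D ρ hD hρ hb
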